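/- If an efficient quartet q of T distinguishes the path between internal vertices v_i and v_j, then q is displayed by T. -/

import Mathlib

/-!
The `a`–`b` path `P` passes through `vi` but not through `vj`: if it met `vj`, one of its
two halves at `vj` would join `a` or `b` to `vj` without crossing `vi`. Hence every vertex
of `P` is joined to `vi` along `P` without crossing `vj`. If the `c`–`d` path met `P` at `u`,
one of its halves at `u` would avoid `vj`, so `c` or `d` would reach `vi` without crossing `vj`.
-/

open SimpleGraph

variable {V : Type*}

/-- `x` and `y` are joined by a walk in `G` avoiding the vertex set `S`. -/
def Avoids (G : SimpleGraph V) (S : Set V) (x y : V) : Prop :=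
  ∃ w : G.Walk x y, ∀ u ∈ w.support, u ∉ S

/-- `x` and `y` are joined by a walk in `G` avoiding the edge set `F`. -/
def AvoidsE (G : SimpleGraph V) (F : Set (Sym2 V)) (x y : V) : Prop :=
  ∃ w : G.Walk x y, ∀ e ∈ w.edges, e ∉ F

/-- A leaf of a tree: a vertex with exactly one neighbour (degree one). -/
def IsLeaf (G : SimpleGraph V) (v : V) : Prop := ∃! u, G.Adj v u

/-- An internal vertex of degree three: exactly three distinct neighbours. -/
def IsDeg3 (G : SimpleGraph V) (v : V) : Prop :=
  ∃ a b c, a ≠ b ∧ a ≠ c ∧ b ≠ c ∧ G.Adj v a ∧ G.Adj v b ∧ G.Adj v c ∧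
    ∀ u, G.Adj v u → u = a ∨ u = b ∨ u = c

/-- An unrooted binary phylogenetic tree: a tree all of whose vertices are
leaves (degree 1) or internal vertices of degree 3. -/
def IsBinaryTree (G : SimpleGraph V) : Prop :=
  G.IsTree ∧ ∀ v, IsLeaf G v ∨ IsDeg3 G v

/-- The tree displays the quartet `ab|cd`: there are vertex-disjoint walks
joining `a` to `b` and `c` to `d`. -/
def Displays (G : SimpleGraph V) (a b c d : V) : Prop :=
  ∃ (p : G.Walk a b) (q : G.Walk c d), ∀ u ∈ p.support, u ∉ q.support

/-- The quartet `ab|cd` distinguishes the path `p` between internal vertices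
`v1` and `v2`: `{a,b}` and `{c,d}` lie in different connected components of
the graph obtained by removing the path `p`, the `a`–`b` path passes through
`v1`, and the `c`–`d` path passes through `v2`. -/
def DistPath (G : SimpleGraph V) (a b c d v1 v2 : V) : Prop :=
  ∃ p : G.Walk v1 v2, p.IsPath ∧
    AvoidsE G {e | e ∈ p.edges} a b ∧ AvoidsE G {e | e ∈ p.edges} c d ∧
    ¬ AvoidsE G {e | e ∈ p.edges} a c ∧
    ¬ Avoids G {v1} a b ∧ ¬ Avoids G {v2} c d

namespace Avoids

variable {G : SimpleGraph V} {S : Set V} {x y z : V}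

lemma symm (h : Avoids G S x y) : Avoids G S y x := by
  obtain ⟨w, hw⟩ := h
  exact ⟨w.reverse, fun u hu => hw u (by simpa using hu)⟩

lemma trans (hxy : Avoids G S x y) (hyz : Avoids G S y z) : Avoids G S x z := by
  obtain ⟨w₁, hw₁⟩ := hxy
  obtain ⟨w₂, hw₂⟩ := hyz
  refine ⟨w₁.append w₂, fun u hu => ?_⟩
  rcases (Walk.mem_support_append_iff w₁ w₂).mp hu with hu | hu
  exacts [hw₁ u hu, hw₂ u hu]

end Avoids

namespace SimpleGraph.Walk

variable {G : SimpleGraph V} {x y : V}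

lemma mem_support_of_not_avoids {v : V} (h : ¬ Avoids G {v} x y) (w : G.Walk x y) :
    v ∈ w.support := by
  by_contra hv
  exact h ⟨w, fun u hu (huv : u = v) => hv (huv ▸ hu)⟩

lemma avoids_of_mem_support {S : Set V} {w : G.Walk x y}
    (hw : ∀ u ∈ w.support, u ∉ S) {u v : V} (hu : u ∈ w.support) (hv : v ∈ w.support) :
    Avoids G S u v := by
  classical
  have avoids_end {t : V} (ht : t ∈ w.support) : Avoids G S t y :=
    ⟨w.dropUntil t ht, fun z hz => hw z (w.support_dropUntil_subset_support ht hz)⟩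
  exact (avoids_end hu).trans (avoids_end hv).symm

lemma IsPath.avoids_or_avoids {p : G.Walk x y} (hp : p.IsPath) {u v : V}
    (hu : u ∈ p.support) (huv : u ≠ v) : Avoids G {v} x u ∨ Avoids G {v} u y := by
  classical
  by_contra! h
  have hv₁ := (p.takeUntil u hu).mem_support_of_not_avoids h.1
  have hv₂ : v ∈ (p.dropUntil u hu).support.tail :=
    (mem_support_iff _).mp ((p.dropUntil u hu).mem_support_of_not_avoids h.2)
      |>.resolve_left huv.symm
  have hnodup := hp.support_nodup
  rw [← p.take_spec hu, support_append, List.nodup_append] at hnodup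
  exact hnodup.2.2 v hv₁ v hv₂ rfl

end SimpleGraph.Walk

theorem stmt17_general {V : Type*} (G : SimpleGraph V)
    (hT : IsBinaryTree G) (vi vj : V) (hne : vi ≠ vj)
    (a b c d : V)
    (hab : ¬ Avoids G {vi} a b)
    (hav : ¬ Avoids G {vi} a vj) (hbv : ¬ Avoids G {vi} b vj)
    (hcv : ¬ Avoids G {vj} c vi) (hdv : ¬ Avoids G {vj} d vi) :
    Displays G a b c d := by
  obtain ⟨P, hP⟩ := (hT.1.connected a b).exists_isPath
  obtain ⟨Q, hQ⟩ := (hT.1.connected c d).exists_isPath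
  have hviP : vi ∈ P.support := P.mem_support_of_not_avoids hab
  have hvjP : vj ∉ P.support := fun hvjP =>
    (hP.avoids_or_avoids hvjP hne.symm).elim hav fun h => hbv h.symm
  refine ⟨P, Q, fun u huP huQ => ?_⟩
  have hu_vi : Avoids G {vj} u vi :=
    P.avoids_of_mem_support (fun z hz (hzj : z = vj) => hvjP (hzj ▸ hz)) huP hviP
  rcases hQ.avoids_or_avoids huQ (fun h : u = vj => hvjP (h ▸ huP)) with hc_u | hu_d
  · exact hcv (hc_u.trans hu_vi)
  · exact hdv (hu_d.symm.trans hu_vi)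

/-- If an efficient quartet `q = ab|cd` of `T` (with `a, b` representative
leaves of the components of `T − vi` not containing `vj`, and `c, d`
representative leaves of the components of `T − vj` not containing `vi`)
distinguishes the path between the internal vertices `vi` and `vj`, then `q` is
displayed by `T`. -/
theorem stmt17 {V : Type*} [Fintype V] (G : SimpleGraph V)
    (hT : IsBinaryTree G) (vi vj : V) (hne : vi ≠ vj)
    (hi : IsDeg3 G vi) (hj : IsDeg3 G vj)
    (a b c d : V)
    (ha : IsLeaf G a) (hb : IsLeaf G b) (hc : IsLeaf G c) (hd : IsLeaf G d)
    (hab : ¬ Avoids G {vi} a b)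
    (hav : ¬ Avoids G {vi} a vj) (hbv : ¬ Avoids G {vi} b vj)
    (hcd : ¬ Avoids G {vj} c d)
    (hcv : ¬ Avoids G {vj} c vi) (hdv : ¬ Avoids G {vj} d vi)
    (hdist : DistPath G a b c d vi vj) :
    Displays G a b c d :=
  stmt17_general G hT vi vj hne a b c d hab hav hbv hcv hdv
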